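/- For a TRS R with AC symbols, the relations →R/AC (= ∼AC · →R · ∼AC) and →R^e,AC · ∼AC coincide. -/

import Mathlib

/-- First-order terms over a signature `F` with natural-number variables. -/
inductive Tm (F : Type) : Type
  | var : Nat → Tm F
  | fn  : F → List (Tm F) → Tm F

namespace Tm

variable {F : Type}

mutual
def subst (σ : Nat → Tm F) : Tm F → Tm F
  | .var n => σ n
  | .fn f ts => .fn f (substList σ ts)
def substList (σ : Nat → Tm F) : List (Tm F) → List (Tm F)
  | [] => []
  | t :: ts => subst σ t :: substList σ ts
end

mutual
def varsList : Tm F → List Nat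
  | .var n => [n]
  | .fn _ ts => varsListL ts
def varsListL : List (Tm F) → List Nat
  | [] => []
  | t :: ts => varsList t ++ varsListL ts
end

/-- The set of variables of a term. -/
def vars (t : Tm F) : Set Nat := {n | n ∈ varsList t}

/-- A term is linear if no variable occurs more than once. -/
def Linear (t : Tm F) : Prop := (varsList t).Nodup

/-- The subterm at a given position (if the position exists). -/
def subtermAt : Tm F → List Nat → Option (Tm F)
  | t, [] => some t
  | .var _, _ :: _ => none
  | .fn _ ts, i :: p =>
    match ts[i]? with
    | some u => subtermAt u p
    | none => none
  termination_by t p => p.length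

/-- Replacement of the subterm at a given position. -/
def replaceAt : Tm F → List Nat → Tm F → Option (Tm F)
  | _, [], s => some s
  | .var _, _ :: _, _ => none
  | .fn f ts, i :: p, s =>
    match ts[i]? with
    | some u => (replaceAt u p s).map fun u' => .fn f (ts.set i u')
    | none => none
  termination_by t p _ => p.length

end Tm

open Tm

/-- A term rewrite system (or equational system): a set of pairs of terms. -/
abbrev TRS (F : Type) := Set (Tm F × Tm F)

/-- Well-formedness of the rules: left-hand sides are not variables and
variables of right-hand sides occur on the left. -/
def IsTRS {F : Type} (R : TRS F) : Prop :=
  ∀ p ∈ R, (∀ n, p.1 ≠ .var n) ∧ vars p.2 ⊆ vars p.1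

def LeftLinear {F : Type} (R : TRS F) : Prop := ∀ p ∈ R, Linear p.1

/-- One-step rewrite relation of a set of rules (closed under contexts and
substitutions). -/
def Rew {F : Type} (R : TRS F) (s t : Tm F) : Prop :=
  ∃ p l r σ, (l, r) ∈ R ∧ subtermAt s p = some (subst σ l) ∧
    replaceAt s p (subst σ r) = some t

/-- Normal forms. -/
def NF {A : Type} (r : A → A → Prop) (a : A) : Prop := ∀ b, ¬ r a b

/-- The equational theory `∼B` generated by an ES `B`. -/
def simE {F : Type} (B : TRS F) : Tm F → Tm F → Prop :=
  Relation.EqvGen (Rew B)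

/-- Rewriting modulo: `∼B · →R · ∼B`. -/
def RewMod {F : Type} (R B : TRS F) (s t : Tm F) : Prop :=
  ∃ s' t', simE B s s' ∧ Rew R s' t' ∧ simE B t' t

def Terminating {F : Type} (R : TRS F) : Prop :=
  WellFounded (fun a b => Rew R b a)

def TerminatingMod {F : Type} (R B : TRS F) : Prop :=
  WellFounded (fun a b => RewMod R B b a)

/-- Conversion modulo `B`: arbitrary sequences of `→R`, `←R` and `∼B` steps. -/
def ConvMod {F : Type} (R B : TRS F) : Tm F → Tm F → Prop :=
  Relation.ReflTransGen (fun a b => Rew R a b ∨ Rew R b a ∨ simE B a b)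

/-- Joinability modulo `B` using the plain rewrite relation:
`→R* · ∼B · ←R*`. -/
def JoinMod {F : Type} (R B : TRS F) (s t : Tm F) : Prop :=
  ∃ u v, Relation.ReflTransGen (Rew R) s u ∧ simE B u v ∧
    Relation.ReflTransGen (Rew R) t v

def ChurchRosserMod {F : Type} (R B : TRS F) : Prop :=
  ∀ s t, ConvMod R B s t → JoinMod R B s t

def Joinable {F : Type} (R : TRS F) (s t : Tm F) : Prop :=
  ∃ v, Relation.ReflTransGen (Rew R) s v ∧ Relation.ReflTransGen (Rew R) t v

def Confluent {F : Type} (R : TRS F) : Prop :=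
  ∀ s t u, Relation.ReflTransGen (Rew R) s t → Relation.ReflTransGen (Rew R) s u →
    Joinable R t u

/-- Renaming a term by a bijection on variables. -/
def rename {F : Type} (ρ : Nat ≃ Nat) (t : Tm F) : Tm F :=
  subst (fun n => .var (ρ n)) t

def VariantTm {F : Type} (s t : Tm F) : Prop := ∃ ρ : Nat ≃ Nat, rename ρ s = t

def VariantRule {F : Type} (p q : Tm F × Tm F) : Prop :=
  ∃ ρ : Nat ≃ Nat, rename ρ p.1 = q.1 ∧ rename ρ p.2 = q.2

def Unifies {F : Type} (σ : Nat → Tm F) (s t : Tm F) : Prop := subst σ s = subst σ t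

/-- Most general unifier. -/
def IsMGU {F : Type} (σ : Nat → Tm F) (s t : Tm F) : Prop :=
  Unifies σ s t ∧ ∀ τ, Unifies τ s t → ∃ δ, ∀ n, τ n = subst δ (σ n)

/-- `CriticalPeak R₁ R₂ t p s u` : `t ←R₁[p] s →R₂[ε] u` is a critical peak
obtained from an overlap of variable-disjoint variants of rules of `R₁`
(inner rule) and `R₂` (root rule). -/
def CriticalPeak {F : Type} (R₁ R₂ : TRS F) (t : Tm F) (p : List Nat) (s u : Tm F) :
    Prop :=
  ∃ l₁ r₁ l₂ r₂ σ,
    (∃ q ∈ R₁, VariantRule q (l₁, r₁)) ∧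
    (∃ q ∈ R₂, VariantRule q (l₂, r₂)) ∧
    (vars l₁ ∪ vars r₁) ∩ (vars l₂ ∪ vars r₂) = ∅ ∧
    (∃ f ts, subtermAt l₂ p = some (.fn f ts) ∧ IsMGU σ l₁ (.fn f ts)) ∧
    (p = [] → ¬ VariantRule (l₁, r₁) (l₂, r₂)) ∧
    s = subst σ l₂ ∧
    replaceAt s p (subst σ r₁) = some t ∧
    u = subst σ r₂

/-- The set of critical pairs between `R₁` and `R₂`. -/
def CP {F : Type} (R₁ R₂ : TRS F) : Set (Tm F × Tm F) :=
  {tu | ∃ p s, CriticalPeak R₁ R₂ tu.1 p s tu.2}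

/-- A critical peak `t ←[p] s →[ε] u` is prime (w.r.t. `R`) if all proper
subterms of `s|p` are in normal form w.r.t. `→R`. -/
def PrimeAt {F : Type} (R : TRS F) (s : Tm F) (p : List Nat) : Prop :=
  ∀ q v, q ≠ [] → subtermAt s (p ++ q) = some v → NF (Rew R) v

/-- Prime critical pairs of a TRS. -/
def PCP {F : Type} (R : TRS F) : Set (Tm F × Tm F) :=
  {tu | ∃ p s, CriticalPeak R R tu.1 p s tu.2 ∧ PrimeAt R s p}

/-- `E ∪ E⁻¹`. -/
def sympm {F : Type} (E : TRS F) : TRS F :=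
  E ∪ {q | ∃ p ∈ E, q = (p.2, p.1)}

/-- Prime critical pairs between `R` and `B^±` (in both directions), where
primality is always checked with respect to `→R`. -/
def PCPpm {F : Type} (R B : TRS F) : Set (Tm F × Tm F) :=
  {tu | ∃ p s, (CriticalPeak R (sympm B) tu.1 p s tu.2 ∨
                CriticalPeak (sympm B) R tu.1 p s tu.2) ∧ PrimeAt R s p}

/-- The associativity and commutativity axioms for the symbols in `Ac`,
oriented left-to-right. -/
def ACax {F : Type} (Ac : Set F) : TRS F :=
  {q | ∃ f ∈ Ac,
    q = (Tm.fn f [Tm.fn f [Tm.var 0, Tm.var 1], Tm.var 2],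
         Tm.fn f [Tm.var 0, Tm.fn f [Tm.var 1, Tm.var 2]]) ∨
    q = (Tm.fn f [Tm.var 0, Tm.var 1], Tm.fn f [Tm.var 1, Tm.var 0])}

/-- AC equivalence of terms. -/
def simAC {F : Type} (Ac : Set F) : Tm F → Tm F → Prop := simE (ACax Ac)

/-- Peterson–Stickel rewriting: rewriting with AC matching at the redex. -/
def RewPS {F : Type} (Ac : Set F) (R : TRS F) (s t : Tm F) : Prop :=
  ∃ p l r σ w, (l, r) ∈ R ∧ subtermAt s p = some w ∧ simAC Ac w (subst σ l) ∧
    replaceAt s p (subst σ r) = some t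

/-- The extended system `R^e`: `R` together with all extensions
`f(f(u,v),x) → f(r,x)` of rules `f(u,v) → r` with `f` an AC symbol
and `x` a fresh variable. -/
def ACExt {F : Type} (Ac : Set F) (R : TRS F) : TRS F :=
  R ∪ {q | ∃ f ∈ Ac, ∃ u v r x, (Tm.fn f [u, v], r) ∈ R ∧
        x ∉ vars (Tm.fn f [u, v]) ∧ x ∉ vars r ∧
        q = (Tm.fn f [Tm.fn f [u, v], Tm.var x], Tm.fn f [r, Tm.var x])}


namespace Tm

theorem substList_length (σ : Nat → Tm F) : ∀ ts : List (Tm F),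
    (substList σ ts).length = ts.length
  | [] => rfl
  | t :: ts => by rw [substList]; simp [substList_length σ ts]

mutual
theorem subst_congr (σ τ : Nat → Tm F) : ∀ t : Tm F,
    (∀ n ∈ varsList t, σ n = τ n) → subst σ t = subst τ t
  | .var n, h => by simpa [subst, varsList] using h n (by simp [varsList])
  | .fn f ts, h => by
      rw [subst, subst, substList_congr σ τ ts (by simpa [varsList] using h)]
theorem substList_congr (σ τ : Nat → Tm F) : ∀ ts : List (Tm F),
    (∀ n ∈ varsListL ts, σ n = τ n) → substList σ ts = substList τ ts
  | [], _ => rfl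
  | t :: ts, h => by
      rw [substList, substList,
        subst_congr σ τ t (fun n hn => h n (by simp [varsListL, hn])),
        substList_congr σ τ ts (fun n hn => h n (by simp [varsListL, hn]))]
end

@[simp] theorem subtermAt_nil (t : Tm F) : subtermAt t [] = some t := by
  simp [subtermAt]

@[simp] theorem subtermAt_var (n : Nat) (i : Nat) (p : List Nat) :
    subtermAt (.var n : Tm F) (i :: p) = none := by simp [subtermAt]

@[simp] theorem subtermAt_fn (f : F) (ts : List (Tm F)) (i : Nat) (p : List Nat) :
    subtermAt (.fn f ts) (i :: p) = (ts[i]?).bind (fun u => subtermAt u p) := by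
  rw [subtermAt]; cases ts[i]? <;> simp

@[simp] theorem replaceAt_nil (t s : Tm F) : replaceAt t [] s = some s := by
  simp [replaceAt]

@[simp] theorem replaceAt_var (n : Nat) (i : Nat) (p : List Nat) (s : Tm F) :
    replaceAt (.var n : Tm F) (i :: p) s = none := by simp [replaceAt]

@[simp] theorem replaceAt_fn (f : F) (ts : List (Tm F)) (i : Nat) (p : List Nat)
    (s : Tm F) :
    replaceAt (.fn f ts) (i :: p) s =
      (ts[i]?).bind (fun u => (replaceAt u p s).map fun u' => .fn f (ts.set i u')) := by
  rw [replaceAt]; cases ts[i]? <;> simp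

theorem subtermAt_append : ∀ (p q : List Nat) (s : Tm F),
    subtermAt s (p ++ q) = (subtermAt s p).bind (fun u => subtermAt u q)
  | [], q, s => by simp
  | i :: p, q, .var n => by simp
  | i :: p, q, .fn f ts => by
      rw [List.cons_append]
      cases h : ts[i]? with
      | none => simp [h]
      | some u => simp [h, subtermAt_append p q u]

theorem replaceAt_isSome : ∀ (p : List Nat) (s w w' : Tm F),
    (replaceAt s p w).isSome = (replaceAt s p w').isSome
  | [], s, w, w' => by simp
  | i :: p, .var n, w, w' => by simp
  | i :: p, .fn f ts, w, w' => by
      cases h : ts[i]? with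
      | none => simp [h]
      | some u => simp [h, Option.isSome_map, replaceAt_isSome p u w w']

theorem replaceAt_isSome_iff : ∀ (p : List Nat) (s w : Tm F),
    (replaceAt s p w).isSome = (subtermAt s p).isSome
  | [], s, w => by simp
  | i :: p, .var n, w => by simp
  | i :: p, .fn f ts, w => by
      cases h : ts[i]? with
      | none => simp [h]
      | some u => simp [h, Option.isSome_map, replaceAt_isSome_iff p u w]

theorem replaceAt_of_subtermAt {p : List Nat} {s u : Tm F} (h : subtermAt s p = some u)
    (w : Tm F) : ∃ t, replaceAt s p w = some t := by
  have h2 := replaceAt_isSome_iff p s w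
  rw [h] at h2
  exact Option.isSome_iff_exists.mp (by simp [h2])

theorem replaceAt_append : ∀ (p q : List Nat) (s w : Tm F),
    replaceAt s (p ++ q) w =
      (subtermAt s p).bind (fun d => (replaceAt d q w).bind (fun d' => replaceAt s p d'))
  | [], q, s, w => by
      cases h : replaceAt s q w <;> simp [h]
  | i :: p, q, .var n, w => by simp
  | i :: p, q, .fn f ts, w => by
      rw [List.cons_append]
      cases h : ts[i]? with
      | none => simp [h]
      | some u =>
        simp only [replaceAt_fn, subtermAt_fn, h, Option.bind_some]
        rw [replaceAt_append p q u w]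
        cases h1 : subtermAt u p with
        | none => simp
        | some d =>
          cases h2 : replaceAt d q w with
          | none => simp
          | some d' =>
            simp only [Option.bind_some]
            cases h3 : replaceAt u p d' <;> simp [h, h3]

theorem subtermAt_replaceAt : ∀ (p : List Nat) (s w t : Tm F),
    replaceAt s p w = some t → subtermAt t p = some w
  | [], s, w, t, h => by simp at h; simp [← h]
  | i :: p, .var n, w, t, h => by simp at h
  | i :: p, .fn f ts, w, t, h => by
      cases h1 : ts[i]? with
      | none => simp [h1] at h
      | some u =>
        simp only [replaceAt_fn, h1, Option.bind_some, Option.map_eq_some_iff] at h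
        obtain ⟨u', hu', rfl⟩ := h
        have hi : i < ts.length := (List.getElem?_eq_some_iff.mp h1).1
        simp [List.getElem?_set_self hi]
        exact subtermAt_replaceAt p u w u' hu'

theorem replaceAt_replaceAt : ∀ (p : List Nat) (s w t v : Tm F),
    replaceAt s p w = some t → replaceAt t p v = replaceAt s p v
  | [], s, w, t, v, h => by simp
  | i :: p, .var n, w, t, v, h => by simp at h
  | i :: p, .fn f ts, w, t, v, h => by
      cases h1 : ts[i]? with
      | none => simp [h1] at h
      | some u =>
        simp only [replaceAt_fn, h1, Option.bind_some, Option.map_eq_some_iff] at h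
        obtain ⟨u', hu', rfl⟩ := h
        have hi : i < ts.length := (List.getElem?_eq_some_iff.mp h1).1
        simp only [replaceAt_fn, List.getElem?_set_self hi, h1, Option.bind_some]
        rw [replaceAt_replaceAt p u w u' v hu']
        cases h3 : replaceAt u p v <;> simp [List.set_set]

theorem replaceAt_self : ∀ (p : List Nat) (s w : Tm F),
    subtermAt s p = some w → replaceAt s p w = some s
  | [], s, w, h => by simp at h; simp [h]
  | i :: p, .var n, w, h => by simp at h
  | i :: p, .fn f ts, w, h => by
      cases h1 : ts[i]? with
      | none => simp [h1] at h
      | some u =>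
        simp only [subtermAt_fn, h1, Option.bind_some] at h
        have hset : ts.set i u = ts := by
          obtain ⟨hi, hget⟩ := List.getElem?_eq_some_iff.mp h1
          apply List.ext_getElem (by simp)
          intro n h1n h2n
          rcases eq_or_ne i n with rfl | hne
          · simpa [List.getElem_set] using hget.symm
          · simp [List.getElem_set, hne]
        simp [h1, replaceAt_self p u w h, hset]

/-- Trichotomy for positions. -/
theorem pos_trichotomy : ∀ p q : List Nat,
    (∃ r, q = p ++ r) ∨ (∃ r, p = q ++ r) ∨
    (∃ (c : List Nat) (i j : Nat) (p' q' : List Nat),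
      i ≠ j ∧ p = c ++ i :: p' ∧ q = c ++ j :: q')
  | [], q => Or.inl ⟨q, rfl⟩
  | p, [] => Or.inr (Or.inl ⟨p, rfl⟩)
  | i :: p, j :: q => by
      rcases eq_or_ne i j with rfl | hne
      · rcases pos_trichotomy p q with ⟨r, rfl⟩ | ⟨r, rfl⟩ | ⟨c, a, b, p', q', hab, rfl, rfl⟩
        · exact Or.inl ⟨r, rfl⟩
        · exact Or.inr (Or.inl ⟨r, rfl⟩)
        · exact Or.inr (Or.inr ⟨i :: c, a, b, p', q', hab, rfl, rfl⟩)
      · exact Or.inr (Or.inr ⟨[], i, j, p, q, hne, rfl, rfl⟩)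

theorem subtermAt_replaceAt_diverge : ∀ (c : List Nat) {i j : Nat} (p' q' : List Nat)
    (s s' w : Tm F), i ≠ j → replaceAt s (c ++ j :: q') w = some s' →
    subtermAt s' (c ++ i :: p') = subtermAt s (c ++ i :: p')
  | [], i, j, p', q', .var n, s', w, hij, h => by simp at h
  | [], i, j, p', q', .fn f ts, s', w, hij, h => by
      simp only [List.nil_append, replaceAt_fn] at h ⊢
      cases h1 : ts[j]? with
      | none => simp [h1] at h
      | some u =>
        rw [h1] at h
        simp only [Option.bind_some, Option.map_eq_some_iff] at h
        obtain ⟨u', _, rfl⟩ := h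
        simp [List.getElem?_set_ne (Ne.symm hij)]
  | k :: c, i, j, p', q', .var n, s', w, hij, h => by simp at h
  | k :: c, i, j, p', q', .fn f ts, s', w, hij, h => by
      simp only [List.cons_append, replaceAt_fn] at h ⊢
      cases h1 : ts[k]? with
      | none => simp [h1] at h
      | some u =>
        rw [h1] at h
        simp only [Option.bind_some, Option.map_eq_some_iff] at h
        obtain ⟨u', hu', rfl⟩ := h
        have hk : k < ts.length := (List.getElem?_eq_some_iff.mp h1).1
        simp only [subtermAt_fn, List.getElem?_set_self hk, h1, Option.bind_some]
        rw [subtermAt_replaceAt_diverge c p' q' u u' w hij hu']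

theorem replaceAt_comm_diverge : ∀ (c : List Nat) {i j : Nat} (p' q' : List Nat)
    (s s' u w v : Tm F), i ≠ j → replaceAt s (c ++ j :: q') w = some s' →
    replaceAt s (c ++ i :: p') v = some u →
    ∃ u', replaceAt s' (c ++ i :: p') v = some u' ∧ replaceAt u (c ++ j :: q') w = some u'
  | [], i, j, p', q', .var n, s', u, w, v, hij, h, h2 => by simp at h
  | [], i, j, p', q', .fn f ts, s', u, w, v, hij, h, h2 => by
      simp only [List.nil_append, replaceAt_fn] at h h2 ⊢
      cases h1 : ts[j]? with
      | none => simp [h1] at h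
      | some a =>
        rw [h1] at h
        cases h1' : ts[i]? with
        | none => simp [h1'] at h2
        | some b =>
          rw [h1'] at h2
          simp only [Option.bind_some, Option.map_eq_some_iff] at h h2
          obtain ⟨a', ha', rfl⟩ := h
          obtain ⟨b', hb', rfl⟩ := h2
          refine ⟨.fn f ((ts.set j a').set i b'), ?_, ?_⟩
          · simp [List.getElem?_set_ne (Ne.symm hij), h1', hb']
          · rw [replaceAt_fn, List.getElem?_set_ne hij, h1]
            simp [ha', List.set_comm _ _ hij]
  | k :: c, i, j, p', q', .var n, s', u, w, v, hij, h, h2 => by simp at h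
  | k :: c, i, j, p', q', .fn f ts, s', u, w, v, hij, h, h2 => by
      simp only [List.cons_append, replaceAt_fn] at h h2 ⊢
      cases h1 : ts[k]? with
      | none => simp [h1] at h
      | some a =>
        rw [h1] at h h2
        simp only [Option.bind_some, Option.map_eq_some_iff] at h h2
        obtain ⟨a', ha', rfl⟩ := h
        obtain ⟨b', hb', rfl⟩ := h2
        obtain ⟨u', hu1, hu2⟩ := replaceAt_comm_diverge c p' q' a a' b' w v hij ha' hb'
        have hk : k < ts.length := (List.getElem?_eq_some_iff.mp h1).1
        refine ⟨.fn f (ts.set k u'), ?_, ?_⟩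
        · simp [List.getElem?_set_self hk, hu1, List.set_set]
        · simp [List.getElem?_set_self hk, hu2, List.set_set]

theorem Rew_replaceAt {B : TRS F} {e e' s u u' : Tm F} (h : Rew B e e') (q : List Nat)
    (h1 : replaceAt s q e = some u) (h2 : replaceAt s q e' = some u') : Rew B u u' := by
  obtain ⟨p, l, r, σ, hlr, hsub, hrep⟩ := h
  refine ⟨q ++ p, l, r, σ, hlr, ?_, ?_⟩
  · rw [subtermAt_append, subtermAt_replaceAt q s e u h1, Option.bind_some, hsub]
  · rw [replaceAt_append, subtermAt_replaceAt q s e u h1, Option.bind_some, hrep,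
      Option.bind_some, replaceAt_replaceAt q s e u e' h1, h2]

theorem simE_replaceAt {B : TRS F} {e e' : Tm F} (h : simE B e e') :
    ∀ {s : Tm F} {q : List Nat} {u u' : Tm F},
      replaceAt s q e = some u → replaceAt s q e' = some u' → simE B u u' := by
  induction h with
  | rel a b hab =>
      intro s q u u' h1 h2
      exact Relation.EqvGen.rel _ _ (Rew_replaceAt hab q h1 h2)
  | refl a =>
      intro s q u u' h1 h2
      rw [h1] at h2
      cases h2
      exact Relation.EqvGen.refl _
  | symm a b _ ih =>
      intro s q u u' h1 h2
      exact Relation.EqvGen.symm _ _ (ih h2 h1)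
  | trans x y z _ _ ih1 ih2 =>
      intro s q u u' h1 h2
      have hm : ∃ m, replaceAt s q y = some m :=
        Option.isSome_iff_exists.mp (by rw [replaceAt_isSome q s y x, h1]; rfl)
      obtain ⟨m, hm⟩ := hm
      exact Relation.EqvGen.trans _ _ _ (ih1 h1 hm) (ih2 hm h2)

/-- Head symbol and arity. -/
def headInfo : Tm F → Option (F × Nat)
  | .var _ => none
  | .fn f ts => some (f, ts.length)

theorem Rew_ACax_head {Ac : Set F} {s t : Tm F} (h : Rew (ACax Ac) s t) :
    headInfo s = headInfo t := by
  obtain ⟨p, l, r, σ, hlr, hsub, hrep⟩ := h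
  obtain ⟨f, hf, hax⟩ := hlr
  cases p with
  | nil =>
      simp only [subtermAt_nil, Option.some_inj] at hsub
      simp only [replaceAt_nil, Option.some_inj] at hrep
      subst hsub; subst hrep
      rcases hax with h | h <;>
      · injection h with h1 h2
        subst h1; subst h2
        simp [subst, substList, headInfo]
  | cons i p' =>
      cases s with
      | var n => simp at hsub
      | fn g ts =>
          cases h1 : ts[i]? with
          | none => simp [h1] at hsub
          | some u =>
            simp only [replaceAt_fn, h1, Option.bind_some, Option.map_eq_some_iff] at hrep
            obtain ⟨u', _, rfl⟩ := hrep
            simp [headInfo]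

theorem simAC_head {Ac : Set F} {s t : Tm F} (h : simAC Ac s t) :
    headInfo s = headInfo t := by
  induction h with
  | rel a b hab => exact Rew_ACax_head hab
  | refl a => rfl
  | symm a b _ ih => exact ih.symm
  | trans a b c _ _ ih1 ih2 => exact ih1.trans ih2

theorem simAC_fn_shape {Ac : Set F} {f : F} {b c : Tm F} {w : Tm F}
    (h : simAC Ac (.fn f [b, c]) w) : ∃ w1 w2, w = .fn f [w1, w2] := by
  have := simAC_head h
  cases w with
  | var n => simp [headInfo] at this
  | fn g us =>
      simp only [headInfo, Option.some_inj, Prod.mk.injEq] at this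
      obtain ⟨rfl, hlen⟩ := this
      match us, hlen.symm with
      | [w1, w2], _ => exact ⟨w1, w2, rfl⟩

/-- helper substitution for AC instances -/
private def acSubst (a b c : Tm F) : Nat → Tm F
  | 0 => a
  | 1 => b
  | 2 => c
  | n + 3 => .var (n + 3)

theorem Rew_AC_assoc {Ac : Set F} {f : F} (hf : f ∈ Ac) (a b c : Tm F) :
    Rew (ACax Ac) (.fn f [.fn f [a, b], c]) (.fn f [a, .fn f [b, c]]) := by
  refine ⟨[], _, _, acSubst a b c, ⟨f, hf, Or.inl rfl⟩, ?_, ?_⟩ <;>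
    simp [subst, substList, acSubst]

theorem Rew_AC_comm {Ac : Set F} {f : F} (hf : f ∈ Ac) (a b : Tm F) :
    Rew (ACax Ac) (.fn f [a, b]) (.fn f [b, a]) := by
  refine ⟨[], _, _, acSubst a b b, ⟨f, hf, Or.inr rfl⟩, ?_, ?_⟩ <;>
    simp [subst, substList, acSubst]

theorem simAC_assoc {Ac : Set F} {f : F} (hf : f ∈ Ac) (a b c : Tm F) :
    simAC Ac (.fn f [.fn f [a, b], c]) (.fn f [a, .fn f [b, c]]) :=
  Relation.EqvGen.rel _ _ (Rew_AC_assoc hf a b c)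

theorem simAC_comm {Ac : Set F} {f : F} (hf : f ∈ Ac) (a b : Tm F) :
    simAC Ac (.fn f [a, b]) (.fn f [b, a]) :=
  Relation.EqvGen.rel _ _ (Rew_AC_comm hf a b)

theorem simAC_congr_left {Ac : Set F} {f : F} {e e' : Tm F} (a : Tm F)
    (h : simAC Ac e e') : simAC Ac (.fn f [e, a]) (.fn f [e', a]) := by
  refine simE_replaceAt h (s := .fn f [e, a]) (q := [0]) ?_ ?_ <;> simp

theorem simAC_congr_right {Ac : Set F} {f : F} {e e' : Tm F} (a : Tm F)
    (h : simAC Ac e e') : simAC Ac (.fn f [a, e]) (.fn f [a, e']) := by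
  refine simE_replaceAt h (s := .fn f [a, e]) (q := [1]) ?_ ?_ <;> simp

theorem exists_fresh {F : Type} (l : List Nat) : ∃ x, x ∉ l := by
  refine ⟨l.foldr max 0 + 1, fun hmem => ?_⟩
  have : ∀ (l : List Nat) (n : Nat), n ∈ l → n ≤ l.foldr max 0 := by
    intro l
    induction l with
    | nil => simp
    | cons a l ih =>
        intro n hn
        rcases List.mem_cons.mp hn with rfl | hn
        · simp [List.foldr]
        · exact le_trans (ih n hn) (by simp [List.foldr])
  exact absurd (this l _ hmem) (by omega)

theorem subst_var' (σ : Nat → Tm F) (n : Nat) : subst σ (.var n) = σ n := by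
  simp [subst]

theorem subst_fn' (σ : Nat → Tm F) (f : F) (a b : Tm F) :
    subst σ (.fn f [a, b]) = .fn f [subst σ a, subst σ b] := by
  simp [subst, substList]

theorem subst_ite_eq {x : Nat} {a : Tm F} {σ : Nat → Tm F} {t : Tm F}
    (hx : x ∉ vars t) : subst (fun n => if n = x then a else σ n) t = subst σ t := by
  apply subst_congr
  intro n hn
  have hne : n ≠ x := fun h => hx (h ▸ hn)
  simp [hne]

/-- The key extension lemma: a PS-redex `σL` under an AC symbol `f` can be
extended with an extra argument `a`. -/
theorem ext_lemma {Ac : Set F} {R : TRS F} (hTRS : IsTRS R) {f : F} (hf : f ∈ Ac)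
    {L Rr : Tm F} (hLR : (L, Rr) ∈ ACExt Ac R) {σ : Nat → Tm F} {w1 w2 : Tm F}
    (hshape : subst σ L = .fn f [w1, w2]) (a : Tm F) :
    ∃ (L' Rr' : Tm F) (σ' : Nat → Tm F), (L', Rr') ∈ ACExt Ac R ∧
      simAC Ac (.fn f [a, subst σ L]) (subst σ' L') ∧
      simAC Ac (subst σ' Rr') (.fn f [a, subst σ Rr]) := by
  rcases hLR with hLR | ⟨g, hg, u, v, r, x, hrule, hx1, hx2, heq⟩
  · -- base rule case: use a fresh extension
    have hLvar := (hTRS _ hLR).1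
    cases L with
    | var n => exact absurd rfl (hLvar n)
    | fn g ts =>
        rw [subst] at hshape
        injection hshape with hg hts
        have hlen : ts.length = 2 := by
          have := substList_length σ ts
          rw [hts] at this; simpa using this.symm
        subst hg
        match ts, hlen with
        | [u, v], _ =>
          obtain ⟨x, hx⟩ := exists_fresh (F := F)
            (varsList (.fn g [u, v] : Tm F) ++ varsList Rr)
          have hx1 : x ∉ vars (.fn g [u, v] : Tm F) := fun h =>
            hx (List.mem_append.mpr (Or.inl h))
          have hx2 : x ∉ vars Rr := fun h => hx (List.mem_append.mpr (Or.inr h))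
          refine ⟨.fn g [.fn g [u, v], .var x], .fn g [Rr, .var x],
            fun n => if n = x then a else σ n,
            Or.inr ⟨g, hf, u, v, Rr, x, hLR, hx1, hx2, rfl⟩, ?_, ?_⟩
          · have eL' : subst (fun n => if n = x then a else σ n)
                (.fn g [.fn g [u, v], .var x]) = .fn g [subst σ (.fn g [u, v]), a] := by
              rw [subst_fn', subst_var', subst_ite_eq hx1, if_pos rfl]
            rw [eL']
            exact simAC_comm hf a (subst σ (.fn g [u, v]))
          · have eR' : subst (fun n => if n = x then a else σ n)
                (.fn g [Rr, .var x]) = .fn g [subst σ Rr, a] := by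
              rw [subst_fn', subst_var', subst_ite_eq hx2, if_pos rfl]
            rw [eR']
            exact simAC_comm hf (subst σ Rr) a
  · -- extension rule case: reuse the same extension
    injection heq with heqL heqR
    subst heqL; subst heqR
    rw [subst_fn'] at hshape
    injection hshape with hgf _
    subst hgf
    refine ⟨_, _, fun n => if n = x then .fn g [σ x, a] else σ n, Or.inr
      ⟨g, hg, u, v, r, x, hrule, hx1, hx2, rfl⟩, ?_, ?_⟩
    · have eL : subst σ (.fn g [.fn g [u, v], .var x]) =
          .fn g [subst σ (.fn g [u, v]), σ x] := by rw [subst_fn', subst_var']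
      have eL' : subst (fun n => if n = x then .fn g [σ x, a] else σ n)
          (.fn g [.fn g [u, v], .var x]) =
          .fn g [subst σ (.fn g [u, v]), .fn g [σ x, a]] := by
        rw [subst_fn', subst_var', subst_ite_eq hx1, if_pos rfl]
      rw [eL, eL']
      refine Relation.EqvGen.trans _ _ _
        (simAC_comm hf a (.fn g [subst σ (.fn g [u, v]), σ x])) ?_
      exact simAC_assoc hf (subst σ (.fn g [u, v])) (σ x) a
    · have eR : subst σ (.fn g [r, .var x]) = .fn g [subst σ r, σ x] := by
        rw [subst_fn', subst_var']
      have eR' : subst (fun n => if n = x then .fn g [σ x, a] else σ n)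
          (.fn g [r, .var x]) = .fn g [subst σ r, .fn g [σ x, a]] := by
        rw [subst_fn', subst_var', subst_ite_eq hx2, if_pos rfl]
      rw [eR, eR']
      refine Relation.EqvGen.trans _ _ _
        (Relation.EqvGen.symm _ _ (simAC_assoc hf (subst σ r) (σ x) a)) ?_
      exact simAC_comm hf (.fn g [subst σ r, σ x]) a

theorem coh0 {Ac : Set F} {R : TRS F} (hTRS : IsTRS R) {d d' e' : Tm F}
    (hshape :
      (∃ f a b c, f ∈ Ac ∧ d = .fn f [.fn f [a, b], c] ∧ d' = .fn f [a, .fn f [b, c]]) ∨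
      (∃ f a b c, f ∈ Ac ∧ d = .fn f [a, .fn f [b, c]] ∧ d' = .fn f [.fn f [a, b], c]) ∨
      (∃ f a b, f ∈ Ac ∧ d = .fn f [a, b] ∧ d' = .fn f [b, a]))
    (hPS : RewPS Ac (ACExt Ac R) d' e') :
    ∃ e, RewPS Ac (ACExt Ac R) d e ∧ simAC Ac e e' := by
  have hdd' : simAC Ac d d' := by
    rcases hshape with ⟨f, a, b, c, hf, rfl, rfl⟩ | ⟨f, a, b, c, hf, rfl, rfl⟩ |
      ⟨f, a, b, hf, rfl, rfl⟩
    · exact simAC_assoc hf a b c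
    · exact Relation.EqvGen.symm _ _ (simAC_assoc hf a b c)
    · exact simAC_comm hf a b
  obtain ⟨p, L, Rr, σ, w, hrule, hsubt, hsim, hrep⟩ := hPS
  cases p with
  | nil =>
      simp only [subtermAt_nil, Option.some_inj] at hsubt
      simp only [replaceAt_nil, Option.some_inj] at hrep
      subst hsubt; subst hrep
      exact ⟨subst σ Rr, ⟨[], L, Rr, σ, d, hrule, by simp,
        Relation.EqvGen.trans _ _ _ hdd' hsim, by simp⟩, Relation.EqvGen.refl _⟩
  | cons i rest =>
    rcases hshape with ⟨f, a, b, c, hf, rfl, rfl⟩ | ⟨f, a, b, c, hf, rfl, rfl⟩ |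
      ⟨f, a, b, hf, rfl, rfl⟩
    · -- case A : d = f(f(a,b),c), d' = f(a,f(b,c))
      match i with
      | 0 =>
          simp only [subtermAt_fn, List.getElem?_cons_zero, Option.bind_some] at hsubt
          simp only [replaceAt_fn, List.getElem?_cons_zero, Option.bind_some] at hrep
          rw [Option.map_eq_some_iff] at hrep
          obtain ⟨a', ha', rfl⟩ := hrep
          refine ⟨.fn f [.fn f [a', b], c], ⟨0 :: 0 :: rest, L, Rr, σ, w, hrule,
            by simp [hsubt], hsim, by simp [ha']⟩, ?_⟩
          exact simAC_assoc hf a' b c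
      | 1 =>
        match rest with
        | [] =>
            simp only [subtermAt_fn, List.getElem?_cons_succ, List.getElem?_cons_zero,
              Option.bind_some, subtermAt_nil, Option.some_inj] at hsubt
            simp only [replaceAt_fn, List.getElem?_cons_succ, List.getElem?_cons_zero,
              Option.bind_some, replaceAt_nil, Option.map_some, Option.some_inj] at hrep
            subst hsubt; subst hrep
            obtain ⟨w1, w2, hw⟩ := simAC_fn_shape hsim
            obtain ⟨L', Rr', σ', hrule', hL', hRr'⟩ := ext_lemma hTRS hf hrule hw a
            refine ⟨subst σ' Rr', ⟨[], L', Rr', σ', .fn f [.fn f [a, b], c], hrule',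
              by simp, ?_, by simp⟩, ?_⟩
            · refine Relation.EqvGen.trans _ _ _ (simAC_assoc hf a b c) ?_
              exact Relation.EqvGen.trans _ _ _ (simAC_congr_right a hsim) hL'
            · simpa using hRr'
        | j :: rest' =>
          match j with
          | 0 =>
              simp only [subtermAt_fn, List.getElem?_cons_succ, List.getElem?_cons_zero,
                Option.bind_some] at hsubt
              simp only [replaceAt_fn, List.getElem?_cons_succ, List.getElem?_cons_zero,
                Option.bind_some] at hrep
              rw [Option.map_eq_some_iff] at hrep
              obtain ⟨z, hz, hrep⟩ := hrep
              rw [Option.map_eq_some_iff] at hz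
              obtain ⟨b', hb', rfl⟩ := hz
              subst hrep
              refine ⟨.fn f [.fn f [a, b'], c], ⟨0 :: 1 :: rest', L, Rr, σ, w, hrule,
                by simp [hsubt], hsim, by simp [hb']⟩, ?_⟩
              exact simAC_assoc hf a b' c
          | 1 =>
              simp only [subtermAt_fn, List.getElem?_cons_succ, List.getElem?_cons_zero,
                Option.bind_some] at hsubt
              simp only [replaceAt_fn, List.getElem?_cons_succ, List.getElem?_cons_zero,
                Option.bind_some] at hrep
              rw [Option.map_eq_some_iff] at hrep
              obtain ⟨z, hz, hrep⟩ := hrep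
              rw [Option.map_eq_some_iff] at hz
              obtain ⟨c', hc', rfl⟩ := hz
              subst hrep
              refine ⟨.fn f [.fn f [a, b], c'], ⟨1 :: rest', L, Rr, σ, w, hrule,
                by simp [hsubt], hsim, by simp [hc']⟩, ?_⟩
              exact simAC_assoc hf a b c'
          | (k + 2) => simp at hsubt
      | (k + 2) => simp at hsubt
    · -- case B : d = f(a,f(b,c)), d' = f(f(a,b),c)
      match i with
      | 0 =>
        match rest with
        | [] =>
            simp only [subtermAt_fn, List.getElem?_cons_zero, Option.bind_some,
              subtermAt_nil, Option.some_inj] at hsubt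
            simp only [replaceAt_fn, List.getElem?_cons_zero, Option.bind_some,
              replaceAt_nil, Option.map_some, Option.some_inj] at hrep
            subst hsubt; subst hrep
            obtain ⟨w1, w2, hw⟩ := simAC_fn_shape hsim
            obtain ⟨L', Rr', σ', hrule', hL', hRr'⟩ := ext_lemma hTRS hf hrule hw c
            refine ⟨subst σ' Rr', ⟨[], L', Rr', σ', .fn f [a, .fn f [b, c]], hrule',
              by simp, ?_, by simp⟩, ?_⟩
            · refine Relation.EqvGen.trans _ _ _
                (Relation.EqvGen.symm _ _ (simAC_assoc hf a b c)) ?_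
              refine Relation.EqvGen.trans _ _ _ (simAC_congr_left c hsim) ?_
              exact Relation.EqvGen.trans _ _ _ (simAC_comm hf (subst σ L) c) hL'
            · refine Relation.EqvGen.trans _ _ _ hRr' ?_
              simpa [simAC, simE] using simAC_comm hf c (subst σ Rr)
        | j :: rest' =>
          match j with
          | 0 =>
              simp only [subtermAt_fn, List.getElem?_cons_zero, Option.bind_some] at hsubt
              simp only [replaceAt_fn, List.getElem?_cons_zero, Option.bind_some] at hrep
              rw [Option.map_eq_some_iff] at hrep
              obtain ⟨z, hz, hrep⟩ := hrep
              rw [Option.map_eq_some_iff] at hz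
              obtain ⟨a', ha', rfl⟩ := hz
              subst hrep
              refine ⟨.fn f [a', .fn f [b, c]], ⟨0 :: rest', L, Rr, σ, w, hrule,
                by simp [hsubt], hsim, by simp [ha']⟩, ?_⟩
              exact Relation.EqvGen.symm _ _ (simAC_assoc hf a' b c)
          | 1 =>
              simp only [subtermAt_fn, List.getElem?_cons_zero, List.getElem?_cons_succ,
                Option.bind_some] at hsubt
              simp only [replaceAt_fn, List.getElem?_cons_zero, List.getElem?_cons_succ,
                Option.bind_some] at hrep
              rw [Option.map_eq_some_iff] at hrep
              obtain ⟨z, hz, hrep⟩ := hrep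
              rw [Option.map_eq_some_iff] at hz
              obtain ⟨b', hb', rfl⟩ := hz
              subst hrep
              refine ⟨.fn f [a, .fn f [b', c]], ⟨1 :: 0 :: rest', L, Rr, σ, w, hrule,
                by simp [hsubt], hsim, by simp [hb']⟩, ?_⟩
              exact Relation.EqvGen.symm _ _ (simAC_assoc hf a b' c)
          | (k + 2) => simp at hsubt
      | 1 =>
          simp only [subtermAt_fn, List.getElem?_cons_succ, List.getElem?_cons_zero,
            Option.bind_some] at hsubt
          simp only [replaceAt_fn, List.getElem?_cons_succ, List.getElem?_cons_zero,
            Option.bind_some] at hrep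
          rw [Option.map_eq_some_iff] at hrep
          obtain ⟨c', hc', rfl⟩ := hrep
          refine ⟨.fn f [a, .fn f [b, c']], ⟨1 :: 1 :: rest, L, Rr, σ, w, hrule,
            by simp [hsubt], hsim, by simp [hc']⟩, ?_⟩
          exact Relation.EqvGen.symm _ _ (simAC_assoc hf a b c')
      | (k + 2) => simp at hsubt
    · -- case C : d = f(a,b), d' = f(b,a)
      match i with
      | 0 =>
          simp only [subtermAt_fn, List.getElem?_cons_zero, Option.bind_some] at hsubt
          simp only [replaceAt_fn, List.getElem?_cons_zero, Option.bind_some] at hrep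
          rw [Option.map_eq_some_iff] at hrep
          obtain ⟨b', hb', rfl⟩ := hrep
          refine ⟨.fn f [a, b'], ⟨1 :: rest, L, Rr, σ, w, hrule,
            by simp [hsubt], hsim, by simp [hb']⟩, ?_⟩
          exact simAC_comm hf a b'
      | 1 =>
          simp only [subtermAt_fn, List.getElem?_cons_succ, List.getElem?_cons_zero,
            Option.bind_some] at hsubt
          simp only [replaceAt_fn, List.getElem?_cons_succ, List.getElem?_cons_zero,
            Option.bind_some] at hrep
          rw [Option.map_eq_some_iff] at hrep
          obtain ⟨a', ha', rfl⟩ := hrep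
          refine ⟨.fn f [a', b], ⟨0 :: rest, L, Rr, σ, w, hrule,
            by simp [hsubt], hsim, by simp [ha']⟩, ?_⟩
          exact simAC_comm hf a' b
      | (k + 2) => simp at hsubt

theorem coh1 {Ac : Set F} {R : TRS F} (hTRS : IsTRS R) {s s' t' : Tm F}
    (hstep : Rew (ACax Ac) s s' ∨ Rew (ACax Ac) s' s)
    (hPS : RewPS Ac (ACExt Ac R) s' t') :
    ∃ u, RewPS Ac (ACExt Ac R) s u ∧ simAC Ac u t' := by
  obtain ⟨p, L, Rr, σ, w, hrule, hsubt, hsim, hrep⟩ := hPS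
  have hshape_of : ∀ (τ : Nat → Tm F) (Lax Rax : Tm F), (Lax, Rax) ∈ ACax Ac →
      (∃ f a b c, f ∈ Ac ∧ subst τ Lax = .fn f [.fn f [a, b], c] ∧
        subst τ Rax = .fn f [a, .fn f [b, c]]) ∨
      (∃ f a b, f ∈ Ac ∧ subst τ Lax = .fn f [a, b] ∧ subst τ Rax = .fn f [b, a]) := by
    intro τ Lax Rax hax
    obtain ⟨f, hf, h | h⟩ := hax
    · injection h with h1 h2; subst h1; subst h2
      exact Or.inl ⟨f, τ 0, τ 1, τ 2, hf, by simp [subst_fn', subst_var'],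
        by simp [subst_fn', subst_var']⟩
    · injection h with h1 h2; subst h1; subst h2
      exact Or.inr ⟨f, τ 0, τ 1, hf, by simp [subst_fn', subst_var'],
        by simp [subst_fn', subst_var']⟩
  rcases hstep with ⟨q, Lax, Rax, τ, hax, hq, hr⟩ | ⟨q, Lax, Rax, τ, hax, hq, hr⟩
  · -- s →AC s' at q
    rcases pos_trichotomy p q with ⟨q₁, rfl⟩ | ⟨p₁, rfl⟩ | ⟨c, i, j, p', q', hij, rfl, rfl⟩
    · -- q = p ++ q₁ : AC step at or below the redex
      rw [subtermAt_append] at hq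
      obtain ⟨sp, hsp, hsp2⟩ := Option.bind_eq_some_iff.mp hq
      rw [replaceAt_append, hsp, Option.bind_some] at hr
      obtain ⟨sp', hsp', hsp'2⟩ := Option.bind_eq_some_iff.mp hr
      have hw : subtermAt s' p = some sp' := subtermAt_replaceAt _ _ _ _ hsp'2
      rw [hw, Option.some_inj] at hsubt
      subst hsubt
      have hacs : simAC Ac sp sp' := Relation.EqvGen.rel _ _ ⟨q₁, Lax, Rax, τ, hax, hsp2, hsp'⟩
      obtain ⟨u, hu⟩ := replaceAt_of_subtermAt hsp (subst σ Rr)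
      have : replaceAt s' p (subst σ Rr) = replaceAt s p (subst σ Rr) :=
        replaceAt_replaceAt p s sp' s' (subst σ Rr) hsp'2
      rw [this, hu, Option.some_inj] at hrep
      subst hrep
      exact ⟨u, ⟨p, L, Rr, σ, sp, hrule, hsp, Relation.EqvGen.trans _ _ _ hacs hsim, hu⟩,
        Relation.EqvGen.refl _⟩
    · -- p = q ++ p₁ : AC step strictly above (or at) the redex
      have hd' : subtermAt s' q = some (subst τ Rax) := subtermAt_replaceAt _ _ _ _ hr
      rw [subtermAt_append, hd', Option.bind_some] at hsubt
      rw [replaceAt_append, hd', Option.bind_some] at hrep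
      obtain ⟨e', he', ht'⟩ := Option.bind_eq_some_iff.mp hrep
      have hPS' : RewPS Ac (ACExt Ac R) (subst τ Rax) e' :=
        ⟨p₁, L, Rr, σ, w, hrule, hsubt, hsim, he'⟩
      have hsh : _ := hshape_of τ Lax Rax hax
      obtain ⟨e, hPSe, hee'⟩ := coh0 hTRS (d := subst τ Lax) (d' := subst τ Rax)
        (by rcases hsh with ⟨f, a, b, c, hf, h1, h2⟩ | ⟨f, a, b, hf, h1, h2⟩
            · exact Or.inl ⟨f, a, b, c, hf, h1, h2⟩
            · exact Or.inr (Or.inr ⟨f, a, b, hf, h1, h2⟩)) hPS'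
      obtain ⟨p₀, L₀, R₀, σ₀, w₀, hrule₀, hsub₀, hsim₀, hrep₀⟩ := hPSe
      obtain ⟨u, hue⟩ := replaceAt_of_subtermAt hq e
      have h2 : replaceAt s q e' = some t' := by
        rw [← replaceAt_replaceAt q s (subst τ Rax) s' e' hr]; exact ht'
      refine ⟨u, ⟨q ++ p₀, L₀, R₀, σ₀, w₀, hrule₀,
        by rw [subtermAt_append, hq, Option.bind_some, hsub₀], hsim₀,
        by rw [replaceAt_append, hq, Option.bind_some, hrep₀, Option.bind_some, hue]⟩,
        simE_replaceAt hee' hue h2⟩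
    · -- diverging positions
      have hsub_s : subtermAt s (c ++ i :: p') = some w := by
        rw [← subtermAt_replaceAt_diverge c p' q' s s' (subst τ Rax) hij hr]; exact hsubt
      obtain ⟨u, hu⟩ := replaceAt_of_subtermAt hsub_s (subst σ Rr)
      obtain ⟨u', hu1, hu2⟩ := replaceAt_comm_diverge c p' q' s s' u (subst τ Rax)
        (subst σ Rr) hij hr hu
      rw [hrep, Option.some_inj] at hu1
      subst hu1
      have hquw : subtermAt u (c ++ j :: q') = some (subst τ Lax) := by
        rw [subtermAt_replaceAt_diverge c q' p' s u (subst σ Rr) (Ne.symm hij) hu]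
        exact hq
      exact ⟨u, ⟨c ++ i :: p', L, Rr, σ, w, hrule, hsub_s, hsim, hu⟩,
        Relation.EqvGen.rel _ _ ⟨c ++ j :: q', Lax, Rax, τ, hax, hquw, hu2⟩⟩
  · -- s' →AC s at q
    rcases pos_trichotomy p q with ⟨q₁, rfl⟩ | ⟨p₁, rfl⟩ | ⟨c, i, j, p', q', hij, rfl, rfl⟩
    · -- q = p ++ q₁
      rw [subtermAt_append, hsubt, Option.bind_some] at hq
      rw [replaceAt_append, hsubt, Option.bind_some] at hr
      obtain ⟨w', hw', hw'2⟩ := Option.bind_eq_some_iff.mp hr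
      have hsub_s : subtermAt s p = some w' := subtermAt_replaceAt _ _ _ _ hw'2
      have hacs : simAC Ac w' w :=
        Relation.EqvGen.symm _ _ (Relation.EqvGen.rel _ _ ⟨q₁, Lax, Rax, τ, hax, hq, hw'⟩)
      have heq : replaceAt s p (subst σ Rr) = some t' := by
        rw [replaceAt_replaceAt p s' w' s (subst σ Rr) hw'2]; exact hrep
      exact ⟨t', ⟨p, L, Rr, σ, w', hrule, hsub_s,
        Relation.EqvGen.trans _ _ _ hacs hsim, heq⟩, Relation.EqvGen.refl _⟩
    · -- p = q ++ p₁
      have hd : subtermAt s q = some (subst τ Rax) := subtermAt_replaceAt _ _ _ _ hr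
      rw [subtermAt_append, hq, Option.bind_some] at hsubt
      rw [replaceAt_append, hq, Option.bind_some] at hrep
      obtain ⟨e', he', ht'⟩ := Option.bind_eq_some_iff.mp hrep
      have hPS' : RewPS Ac (ACExt Ac R) (subst τ Lax) e' :=
        ⟨p₁, L, Rr, σ, w, hrule, hsubt, hsim, he'⟩
      have hsh : _ := hshape_of τ Lax Rax hax
      obtain ⟨e, hPSe, hee'⟩ := coh0 hTRS (d := subst τ Rax) (d' := subst τ Lax)
        (by rcases hsh with ⟨f, a, b, c, hf, h1, h2⟩ | ⟨f, a, b, hf, h1, h2⟩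
            · exact Or.inr (Or.inl ⟨f, a, b, c, hf, h2, h1⟩)
            · exact Or.inr (Or.inr ⟨f, b, a, hf, h2, h1⟩)) hPS'
      obtain ⟨p₀, L₀, R₀, σ₀, w₀, hrule₀, hsub₀, hsim₀, hrep₀⟩ := hPSe
      obtain ⟨u, hue⟩ := replaceAt_of_subtermAt hd e
      have h2 : replaceAt s q e' = some t' := by
        rw [replaceAt_replaceAt q s' (subst τ Rax) s e' hr]; exact ht'
      refine ⟨u, ⟨q ++ p₀, L₀, R₀, σ₀, w₀, hrule₀,
        by rw [subtermAt_append, hd, Option.bind_some, hsub₀], hsim₀,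
        by rw [replaceAt_append, hd, Option.bind_some, hrep₀, Option.bind_some, hue]⟩,
        simE_replaceAt hee' hue h2⟩
    · -- diverging positions
      have hsub_s : subtermAt s (c ++ i :: p') = some w := by
        rw [subtermAt_replaceAt_diverge c p' q' s' s (subst τ Rax) hij hr]; exact hsubt
      obtain ⟨u, hu⟩ := replaceAt_of_subtermAt hsub_s (subst σ Rr)
      obtain ⟨u'', hu1, hu2⟩ := replaceAt_comm_diverge c p' q' s' s t' (subst τ Rax)
        (subst σ Rr) hij hr hrep
      rw [hu, Option.some_inj] at hu1
      subst hu1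
      have hqt' : subtermAt t' (c ++ j :: q') = some (subst τ Lax) := by
        rw [subtermAt_replaceAt_diverge c q' p' s' t' (subst σ Rr) (Ne.symm hij) hrep]
        exact hq
      exact ⟨u, ⟨c ++ i :: p', L, Rr, σ, w, hrule, hsub_s, hsim, hu⟩,
        Relation.EqvGen.symm _ _
          (Relation.EqvGen.rel _ _ ⟨c ++ j :: q', Lax, Rax, τ, hax, hqt', hu2⟩)⟩

theorem coherence_pair {Ac : Set F} {R : TRS F} (hTRS : IsTRS R) {s s' : Tm F}
    (h : simAC Ac s s') :
    (∀ t', RewPS Ac (ACExt Ac R) s' t' → ∃ u, RewPS Ac (ACExt Ac R) s u ∧ simAC Ac u t') ∧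
    (∀ t', RewPS Ac (ACExt Ac R) s t' → ∃ u, RewPS Ac (ACExt Ac R) s' u ∧ simAC Ac u t') := by
  induction h with
  | rel a b hab =>
      exact ⟨fun t' h => coh1 hTRS (Or.inl hab) h, fun t' h => coh1 hTRS (Or.inr hab) h⟩
  | refl a =>
      exact ⟨fun t' h => ⟨t', h, Relation.EqvGen.refl _⟩,
        fun t' h => ⟨t', h, Relation.EqvGen.refl _⟩⟩
  | symm x y _ ih => exact ⟨ih.2, ih.1⟩
  | trans x y z _ _ ih1 ih2 =>
      constructor
      · intro t' h
        obtain ⟨u', hu', hsim'⟩ := ih2.1 t' h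
        obtain ⟨u, hu, hsim⟩ := ih1.1 u' hu'
        exact ⟨u, hu, Relation.EqvGen.trans _ _ _ hsim hsim'⟩
      · intro t' h
        obtain ⟨u', hu', hsim'⟩ := ih1.2 t' h
        obtain ⟨u, hu, hsim⟩ := ih2.2 u' hu'
        exact ⟨u, hu, Relation.EqvGen.trans _ _ _ hsim hsim'⟩

theorem Rew_ACExt_imp {Ac : Set F} {R : TRS F} {s t : Tm F}
    (h : Rew (ACExt Ac R) s t) : Rew R s t := by
  obtain ⟨p, L, Rr, σ, hrule, hsub, hrep⟩ := h
  rcases hrule with hrule | ⟨f, hf, u, v, r, x, hr, hx1, hx2, heq⟩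
  · exact ⟨p, L, Rr, σ, hrule, hsub, hrep⟩
  · injection heq with h1 h2
    subst h1; subst h2
    refine ⟨p ++ [0], .fn f [u, v], r, σ, hr, ?_, ?_⟩
    · rw [subtermAt_append, hsub, Option.bind_some, subst_fn', subst_var']
      simp
    · rw [replaceAt_append, hsub, Option.bind_some, subst_fn', subst_var']
      have : replaceAt (.fn f [subst σ (.fn f [u, v]), σ x]) [0] (subst σ r) =
          some (.fn f [subst σ r, σ x]) := by simp
      rw [this, Option.bind_some, ← subst_var' σ x, ← subst_fn']
      exact hrep

end Tm

open Tm in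
/-- The relations `→R/AC` and `→R^e,AC · ∼AC` coincide. -/
theorem stmt16 {F : Type} (Ac : Set F) (R : TRS F) (hTRS : IsTRS R) :
    ∀ s t, RewMod R (ACax Ac) s t ↔
      ∃ u, RewPS Ac (ACExt Ac R) s u ∧ simAC Ac u t := by
  intro s t
  constructor
  · rintro ⟨s₁, t₁, hss₁, hstep, ht₁t⟩
    obtain ⟨p, l, r, σ, hlr, hsub, hrep⟩ := hstep
    have hPS : RewPS Ac (ACExt Ac R) s₁ t₁ :=
      ⟨p, l, r, σ, subst σ l, Or.inl hlr, hsub, Relation.EqvGen.refl _, hrep⟩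
    obtain ⟨u, hu, husim⟩ := (coherence_pair hTRS hss₁).1 t₁ hPS
    exact ⟨u, hu, Relation.EqvGen.trans _ _ _ husim ht₁t⟩
  · rintro ⟨u, ⟨p, L, Rr, σ, w, hrule, hsub, hsim, hrep⟩, hut⟩
    obtain ⟨s₁, hs₁⟩ := replaceAt_of_subtermAt hsub (subst σ L)
    have hss₁ : simE (ACax Ac) s s₁ :=
      simE_replaceAt hsim (replaceAt_self p s w hsub) hs₁
    have hstep : Rew (ACExt Ac R) s₁ u := ⟨p, L, Rr, σ, hrule,
      subtermAt_replaceAt p s (subst σ L) s₁ hs₁,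
      by rw [replaceAt_replaceAt p s (subst σ L) s₁ (subst σ Rr) hs₁]; exact hrep⟩
    exact ⟨s₁, u, hss₁, Rew_ACExt_imp hstep, hut⟩
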